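/- Let M be an even delta-matroid possessing a component of size at least three. Then the basis graph BG(M) contains a triangle; in particular BG(M) is not bipartite. -/

import Mathlib

open scoped symmDiff

/-- A delta-matroid: a finite ground set `E` and a nonempty family `B` of subsets of `E`
satisfying the symmetric exchange axiom. -/
structure DeltaMatroid (α : Type*) [DecidableEq α] where
  E : Finset α
  B : Finset (Finset α)
  nonempty : B.Nonempty
  subset_ground : ∀ S ∈ B, S ⊆ E
  exchange : ∀ B₁ ∈ B, ∀ B₂ ∈ B, ∀ e ∈ B₁ ∆ B₂,
    ∃ f ∈ B₁ ∆ B₂, B₁ ∆ ({e, f} : Finset α) ∈ B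

variable {α : Type*} [DecidableEq α]

/-- A delta-matroid is even if all bases have cardinalities of the same parity. -/
def DeltaMatroid.IsEven (M : DeltaMatroid α) : Prop :=
  ∀ B₁ ∈ M.B, ∀ B₂ ∈ M.B, B₁.card % 2 = B₂.card % 2

/-- `X` is a separator of `M` if `M` is the direct sum of its restrictions to `X`
and to `E \ X`; equivalently, bases can be freely recombined across `X`. -/
def DeltaMatroid.IsSeparator (M : DeltaMatroid α) (X : Finset α) : Prop :=
  X ⊆ M.E ∧ ∀ B₁ ∈ M.B, ∀ B₂ ∈ M.B, (B₁ ∩ X) ∪ (B₂ \ X) ∈ M.B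

/-- A component is a minimal nonempty separator. -/
def DeltaMatroid.IsComponent (M : DeltaMatroid α) (C : Finset α) : Prop :=
  M.IsSeparator C ∧ C.Nonempty ∧
    ∀ X, M.IsSeparator X → X.Nonempty → X ⊆ C → X = C

/-- The basis graph of a delta-matroid: vertices are the bases, two bases being
adjacent iff their symmetric difference has exactly two elements. -/
def DeltaMatroid.BG (M : DeltaMatroid α) : SimpleGraph ↥M.B where
  Adj S T := ((S : Finset α) ∆ (T : Finset α)).card = 2
  symm := by
    constructor
    intro S T h
    beta_reduce at h ⊢
    rwa [symmDiff_comm]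
  loopless := by
    constructor
    intro S h
    simp [symmDiff_self] at h

/-- The graph `G` has a cycle of length `k` through the edge `e`. -/
def CycleThroughEdge {V : Type*} (G : SimpleGraph V) (e : Sym2 V) (k : ℕ) : Prop :=
  ∃ (v : V) (c : G.Walk v v), c.IsCycle ∧ c.length = k ∧ e ∈ c.edges

/-- An edge is pancyclic if it lies in a cycle of every length `3 ≤ k ≤ n`. -/
def EdgePancyclic {V : Type*} [Fintype V] (G : SimpleGraph V) (e : Sym2 V) : Prop :=
  ∀ k, 3 ≤ k → k ≤ Fintype.card V → CycleThroughEdge G e k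

/-- An edge is almost pancyclic if it lies in a cycle of every length `4 ≤ k ≤ n`. -/
def EdgeAlmostPancyclic {V : Type*} [Fintype V] (G : SimpleGraph V) (e : Sym2 V) : Prop :=
  ∀ k, 4 ≤ k → k ≤ Fintype.card V → CycleThroughEdge G e k

/-- An edge is even pancyclic if it lies in a cycle of length `k` for every
`3 ≤ k ≤ n` with `k` even or `k = n`. -/
def EdgeEvenPancyclic {V : Type*} [Fintype V] (G : SimpleGraph V) (e : Sym2 V) : Prop :=
  ∀ k, 3 ≤ k → k ≤ Fintype.card V → (Even k ∨ k = Fintype.card V) →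
    CycleThroughEdge G e k

/-- The hypercube graph `Q_d`: vertices `{0,1}^d`, adjacent iff they differ in
exactly one coordinate. -/
def hypercube (d : ℕ) : SimpleGraph (Fin d → Bool) where
  Adj x y := ∃ i, x i ≠ y i ∧ ∀ j, j ≠ i → x j = y j
  symm := by
    constructor
    rintro x y ⟨i, h, hj⟩
    exact ⟨i, h.symm, fun j hne => (hj j hne).symm⟩
  loopless := by
    constructor
    rintro x ⟨i, h, -⟩
    exact h rfl

/-!
Suppose `BG(M)` is triangle-free. Evenness forces every exchange `B ∆ {e, f}` to use two distinct
elements, and two exchanges `P`, `Q` available at the same basis `A` cannot meet in exactly one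
element, since `A`, `A ∆ P`, `A ∆ Q` would form a triangle; so they are equal or disjoint, and
disjoint ones commute. Hence once some basis admits the exchange `P = {e, f}`, this exchange
propagates along exchange paths to every basis, and any two bases either agree on `P` or differ on
all of `P`: `P` is a separator. A component `C` containing two bases that differ on `C` admits such
an exchange `P ⊆ C` (exchange towards the recombination of the two bases across `C`), and if all
bases agree on `C` every singleton of `C` is a separator. Either way `C` is not minimal when
`|C| ≥ 3`.
-/

open Finset

namespace Finset

theorem card_symmDiff_add_two_mul_card_inter (s t : Finset α) :
    #(s ∆ t) + 2 * #(s ∩ t) = #s + #t := by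
  rw [symmDiff_eq_sup_sdiff_inf, sup_eq_union, inf_eq_inter,
    card_sdiff_of_subset inter_subset_union]
  have := card_union_add_card_inter s t
  have := card_le_card (inter_subset_union (s := s) (t := t))
  omega

theorem card_symmDiff_singleton_mod_two_ne (s : Finset α) (a : α) :
    #(s ∆ {a}) % 2 ≠ #s % 2 := by
  have h := card_symmDiff_add_two_mul_card_inter s {a}
  rw [card_singleton] at h
  omega

theorem eq_or_disjoint_of_card_eq_two {P Q : Finset α} (hP : #P = 2) (hQ : #Q = 2)
    (hPQ : #(P ∩ Q) ≠ 1) : P = Q ∨ Disjoint P Q := by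
  have hle : #(P ∩ Q) ≤ 2 := hP ▸ card_le_card inter_subset_left
  rcases (show #(P ∩ Q) = 0 ∨ #(P ∩ Q) = 2 by omega) with h0 | h2
  · exact Or.inr (disjoint_iff_inter_eq_empty.mpr (card_eq_zero.mp h0))
  · left
    rw [← eq_of_subset_of_card_le (inter_subset_left (s₁ := P) (s₂ := Q)) (by omega),
      eq_of_subset_of_card_le (inter_subset_right (s₁ := P) (s₂ := Q)) (by omega)]

theorem subset_or_disjoint_symmDiff {P Q R : Finset α}
    (hQ : P ⊆ Q ∨ Disjoint P Q) (hR : P ⊆ R ∨ Disjoint P R) :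
    P ⊆ Q ∆ R ∨ Disjoint P (Q ∆ R) := by
  simp only [subset_iff, disjoint_left, mem_symmDiff] at hQ hR ⊢
  rcases hQ with hQ | hQ <;> rcases hR with hR | hR <;> grind

theorem inter_union_sdiff_eq_symmDiff (X Y P : Finset α) :
    X ∩ P ∪ Y \ P = Y ∆ ((X ∆ Y) ∩ P) := by
  ext x
  simp only [mem_union, mem_inter, mem_sdiff, mem_symmDiff]
  tauto

end Finset

namespace DeltaMatroid

variable {M : DeltaMatroid α} {A B₀ P Q : Finset α}

theorem IsEven.exists_exchange_ne (hM : M.IsEven) {X Y : Finset α} (hX : X ∈ M.B)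
    (hY : Y ∈ M.B) {e : α} (he : e ∈ X ∆ Y) :
    ∃ f ∈ X ∆ Y, f ≠ e ∧ X ∆ {e, f} ∈ M.B := by
  obtain ⟨f, hf, hXf⟩ := M.exchange X hX Y hY e he
  refine ⟨f, hf, ?_, hXf⟩
  rintro rfl
  rw [pair_eq_singleton] at hXf
  exact card_symmDiff_singleton_mod_two_ne X f (hM _ hXf _ hX)

theorem bg_adj {X Y : M.B} : M.BG.Adj X Y ↔ #((X : Finset α) ∆ Y) = 2 := Iff.rfl

theorem eq_or_disjoint_of_cliqueFree (htf : M.BG.CliqueFree 3) (hA : A ∈ M.B)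
    (hAP : A ∆ P ∈ M.B) (hAQ : A ∆ Q ∈ M.B) (hP : #P = 2) (hQ : #Q = 2) :
    P = Q ∨ Disjoint P Q := by
  refine eq_or_disjoint_of_card_eq_two hP hQ fun h1 => htf {⟨A, hA⟩, ⟨_, hAP⟩, ⟨_, hAQ⟩} ?_
  have hPQ := card_symmDiff_add_two_mul_card_inter P Q
  rw [SimpleGraph.is3Clique_triple_iff]
  simp only [bg_adj, symmDiff_symmDiff_cancel_left]
  refine ⟨hP, hQ, ?_⟩
  rw [symmDiff_symmDiff_symmDiff_comm, symmDiff_self, bot_symmDiff]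
  omega

theorem symmDiff_symmDiff_mem_of_disjoint (hM : M.IsEven) (htf : M.BG.CliqueFree 3)
    (hA : A ∈ M.B) (hAP : A ∆ P ∈ M.B) (hAQ : A ∆ Q ∈ M.B) (hP : #P = 2) (hQ : #Q = 2)
    (hPQ : Disjoint P Q) : A ∆ P ∆ Q ∈ M.B := by
  obtain ⟨g, hg⟩ : Q.Nonempty := card_pos.mp (by omega)
  have hdiff : (A ∆ P) ∆ (A ∆ Q) = P ∪ Q := by
    rw [symmDiff_symmDiff_symmDiff_comm, symmDiff_self, bot_symmDiff,
      hPQ.symmDiff_eq_sup, sup_eq_union]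
  have hgdiff : g ∈ (A ∆ P) ∆ (A ∆ Q) := hdiff ▸ mem_union_right P hg
  obtain ⟨f, hf, hfg, hR⟩ := hM.exists_exchange_ne hAP hAQ hgdiff
  have hR2 : #{g, f} = 2 := card_pair hfg.symm
  rcases eq_or_disjoint_of_cliqueFree htf hAP (by rwa [symmDiff_symmDiff_cancel_right]) hR hP hR2
    with hPR | hPR
  · exact absurd (hPR ▸ mem_insert_self g {f}) (disjoint_right.mp hPQ hg)
  · have hfQ : f ∈ Q := by
      rw [hdiff, mem_union] at hf
      exact hf.resolve_left (disjoint_right.mp hPR (mem_insert_of_mem (mem_singleton_self f)))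
    rwa [← eq_of_subset_of_card_le (insert_subset hg (singleton_subset_iff.mpr hfQ)) (by omega)]

theorem exchange_step_of_cliqueFree (hM : M.IsEven) (htf : M.BG.CliqueFree 3) (hA : A ∈ M.B)
    (hAP : A ∆ P ∈ M.B) (hAQ : A ∆ Q ∈ M.B) (hP : #P = 2) (hQ : #Q = 2) :
    A ∆ Q ∆ P ∈ M.B ∧ (P ⊆ Q ∨ Disjoint P Q) := by
  rcases eq_or_disjoint_of_cliqueFree htf hA hAP hAQ hP hQ with rfl | hPQ
  · exact ⟨by rwa [symmDiff_symmDiff_cancel_right], Or.inl subset_rfl⟩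
  · rw [symmDiff_right_comm]
    exact ⟨symmDiff_symmDiff_mem_of_disjoint hM htf hA hAP hAQ hP hQ hPQ, Or.inr hPQ⟩

theorem forall_symmDiff_mem_of_cliqueFree (hM : M.IsEven) (htf : M.BG.CliqueFree 3)
    (hB₀ : B₀ ∈ M.B) (hB₀P : B₀ ∆ P ∈ M.B) (hP : #P = 2) :
    ∀ A ∈ M.B, A ∆ P ∈ M.B ∧ (P ⊆ A ∆ B₀ ∨ Disjoint P (A ∆ B₀)) := by
  intro A hA
  induction hn : #(A ∆ B₀) using Nat.strong_induction_on generalizing A with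
  | _ n ih =>
  obtain h0 | ⟨e, he⟩ := (A ∆ B₀).eq_empty_or_nonempty
  · obtain rfl : A = B₀ := symmDiff_eq_bot.mp h0
    exact ⟨hB₀P, Or.inr (h0 ▸ disjoint_empty_right P)⟩
  -- exchange from `A` towards `B₀`, then walk back along that exchange
  obtain ⟨f, hf, hfe, hA'⟩ := hM.exists_exchange_ne hA hB₀ he
  set Q : Finset α := {e, f}
  have hQ : #Q = 2 := card_pair hfe.symm
  have hQsub : Q ⊆ A ∆ B₀ := insert_subset he (singleton_subset_iff.mpr hf)
  have hA'B₀ : A ∆ Q ∆ B₀ = Q ∆ (A ∆ B₀) := by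
    rw [symmDiff_right_comm, symmDiff_comm]
  have hlt : #(A ∆ Q ∆ B₀) < n := by
    rw [hA'B₀, symmDiff_of_le hQsub, card_sdiff_of_subset hQsub, hn, hQ]
    have := card_le_card hQsub
    omega
  obtain ⟨hA'P, hrel⟩ := ih _ hlt _ hA' rfl
  obtain ⟨hAP, hPQ⟩ :=
    exchange_step_of_cliqueFree hM htf hA' hA'P (by rwa [symmDiff_symmDiff_cancel_right]) hP hQ
  rw [symmDiff_symmDiff_cancel_right] at hAP
  refine ⟨hAP, ?_⟩
  rw [← symmDiff_symmDiff_cancel_left Q (A ∆ B₀), ← hA'B₀]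
  exact subset_or_disjoint_symmDiff hPQ hrel

theorem isSeparator_of_forall_disjoint_or_symmDiff_mem (hPE : P ⊆ M.E)
    (h : ∀ X ∈ M.B, ∀ Y ∈ M.B, Disjoint P (X ∆ Y) ∨ (P ⊆ X ∆ Y ∧ Y ∆ P ∈ M.B)) :
    M.IsSeparator P := by
  refine ⟨hPE, fun X hX Y hY => ?_⟩
  rw [inter_union_sdiff_eq_symmDiff]
  rcases h X hX Y hY with hd | ⟨hs, hYP⟩
  · rwa [inter_comm, disjoint_iff_inter_eq_empty.mp hd, ← bot_eq_empty, symmDiff_bot]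
  · rwa [inter_eq_right.mpr hs]

theorem isSeparator_of_cliqueFree (hM : M.IsEven) (htf : M.BG.CliqueFree 3)
    (hB₀ : B₀ ∈ M.B) (hB₀P : B₀ ∆ P ∈ M.B) (hP : #P = 2) (hPE : P ⊆ M.E) :
    M.IsSeparator P := by
  have hall := forall_symmDiff_mem_of_cliqueFree hM htf hB₀ hB₀P hP
  refine isSeparator_of_forall_disjoint_or_symmDiff_mem hPE fun X hX Y hY => ?_
  have hXY : X ∆ Y = X ∆ B₀ ∆ (Y ∆ B₀) := by
    rw [symmDiff_symmDiff_symmDiff_comm, symmDiff_self, symmDiff_bot]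
  rw [hXY]
  rcases subset_or_disjoint_symmDiff (hall X hX).2 (hall Y hY).2 with hs | hd
  · exact Or.inr ⟨hs, (hall Y hY).1⟩
  · exact Or.inl hd

theorem IsEven.not_cliqueFree_bg_of_isComponent (hM : M.IsEven) {C : Finset α}
    (hC : M.IsComponent C) (hC3 : 3 ≤ #C) : ¬ M.BG.CliqueFree 3 := by
  intro htf
  obtain ⟨⟨hCE, hCsep⟩, ⟨x, hx⟩, hmin⟩ := hC
  by_cases hagree : ∀ X ∈ M.B, ∀ Y ∈ M.B, Disjoint C (X ∆ Y)
  · have hxsep : M.IsSeparator {x} := isSeparator_of_forall_disjoint_or_symmDiff_mem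
      (singleton_subset_iff.mpr (hCE hx))
      fun X hX Y hY => Or.inl ((hagree X hX Y hY).mono_left (singleton_subset_iff.mpr hx))
    have := hmin {x} hxsep (singleton_nonempty x) (singleton_subset_iff.mpr hx)
    rw [← this, card_singleton] at hC3
    omega
  push Not at hagree
  obtain ⟨X, hX, Y, hY, hXY⟩ := hagree
  obtain ⟨e, heC, heXY⟩ := not_disjoint_iff.mp hXY
  have hY' := hCsep X hX Y hY
  have hdiff : Y ∆ (X ∩ C ∪ Y \ C) = (X ∆ Y) ∩ C := by
    rw [inter_union_sdiff_eq_symmDiff, symmDiff_symmDiff_cancel_left]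
  obtain ⟨f, hf, hfe, hYef⟩ :=
    hM.exists_exchange_ne hY hY' (hdiff ▸ mem_inter.mpr ⟨heXY, heC⟩)
  have hPC : ({e, f} : Finset α) ⊆ C :=
    insert_subset heC (singleton_subset_iff.mpr (mem_inter.mp (hdiff ▸ hf)).2)
  have hPsep := isSeparator_of_cliqueFree hM htf hY hYef (card_pair hfe.symm) (hPC.trans hCE)
  have := hmin _ hPsep (insert_nonempty e {f}) hPC
  rw [← this, card_pair hfe.symm] at hC3
  omega

end DeltaMatroid

/-- If an even delta-matroid has a component of size at least three, then its
basis graph contains a triangle; in particular it is not bipartite. -/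
theorem statement14 (M : DeltaMatroid α) (hM : M.IsEven)
    (hC : ∃ C, M.IsComponent C ∧ 3 ≤ C.card) :
    (∃ a b c : ↥M.B, M.BG.Adj a b ∧ M.BG.Adj b c ∧ M.BG.Adj a c) ∧
      ¬ M.BG.Colorable 2 := by
  obtain ⟨C, hC, hC3⟩ := hC
  have hnot := hM.not_cliqueFree_bg_of_isComponent hC hC3
  refine ⟨?_, fun hcol => hnot (hcol.cliqueFree (by norm_num))⟩
  obtain ⟨s, hs⟩ : ∃ s, M.BG.IsNClique 3 s := by
    simpa [SimpleGraph.CliqueFree] using hnot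
  obtain ⟨a, b, c, hab, hac, hbc, -⟩ := SimpleGraph.is3Clique_iff.mp hs
  exact ⟨a, b, c, hab, hbc, hac⟩
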